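/- arXiv:1705.08652 — 5 statements merged into one kernel-verified Lean document; each statement's English description precedes it below -/
import Mathlib

section
/- Let A = p_a/(1-p_b), B = ((1-p_a-p_b)/(1-p_b))·p_b^(t-1), C = ((1-p_a-p_b)/(1-p_b))·p_b^(L-t), where 0 ≤ p_a, 0 < p_b < 1, p_a + p_b ≤ 1, 0 ≤ p_c, and 1 ≤ t ≤ L. Then the error term ε = p_b·(B + C - A·B - A·C - B·C) + p_c·(A·B + A·C + B·C) is nonnegative. -/
theorem stmt_4 (p_a p_b p_c : ℝ) (t L : ℕ)
    (ha : 0 ≤ p_a) (hb0 : 0 < p_b) (hb1 : p_b < 1)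
    (hab : p_a + p_b ≤ 1) (hc : 0 ≤ p_c)
    (ht : 1 ≤ t) (htL : t ≤ L)
    (A B C : ℝ)
    (hA : A = p_a / (1 - p_b))
    (hB : B = ((1 - p_a - p_b) / (1 - p_b)) * p_b ^ (t - 1))
    (hC : C = ((1 - p_a - p_b) / (1 - p_b)) * p_b ^ (L - t)) :
    0 ≤ p_b * (B + C - A * B - A * C - B * C) + p_c * (A * B + A * C + B * C) := by
  have h1b : 0 < 1 - p_b := by linarith
  have hnum : 0 ≤ 1 - p_a - p_b := by linarith
  have hA0 : 0 ≤ A := by rw [hA]; positivity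
  have hpow1 : 0 ≤ p_b ^ (t - 1) := by positivity
  have hpow2 : 0 ≤ p_b ^ (L - t) := by positivity
  have hpow1' : p_b ^ (t - 1) ≤ 1 := pow_le_one₀ hb0.le hb1.le
  have hpow2' : p_b ^ (L - t) ≤ 1 := pow_le_one₀ hb0.le hb1.le
  have hB0 : 0 ≤ B := by rw [hB]; positivity
  have hC0 : 0 ≤ C := by rw [hC]; positivity
  have hBle : B ≤ (1 - p_a - p_b) / (1 - p_b) := by
    rw [hB]
    nlinarith [div_nonneg hnum h1b.le]
  have hCle : C ≤ (1 - p_a - p_b) / (1 - p_b) := by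
    rw [hC]
    nlinarith [div_nonneg hnum h1b.le]
  have hsum : A + (1 - p_a - p_b) / (1 - p_b) = 1 := by
    rw [hA]; field_simp; ring
  have hAB : A + B ≤ 1 := by linarith
  have hAC : A + C ≤ 1 := by linarith
  have key : 0 ≤ B + C - A * B - A * C - B * C := by nlinarith
  have habc : 0 ≤ A * B + A * C + B * C := by positivity
  positivity
end

section
/- Let 0 ≤ p_a, 0 < p_b < 1, p_a + p_b ≤ 1, p_c ≥ 0, 1 ≤ t ≤ L. With A = p_a/(1-p_b), B = ((1-p_a-p_b)/(1-p_b))·p_b^(t-1), C = ((1-p_a-p_b)/(1-p_b))·p_b^(L-t), the error term ε = p_b·(B + C - A·B - A·C - B·C) + p_c·(A·B + A·C + B·C) satisfies ε ≤ K · max(p_b^(t-1), p_b^(L-t)) for some constant K depending only on p_a, p_b, p_c (e.g. K = 2·(p_b + 2·p_c)). -/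
theorem stmt_5 (p_a p_b p_c : ℝ) (t L : ℕ)
    (ha : 0 ≤ p_a) (hb0 : 0 < p_b) (hb1 : p_b < 1)
    (hab : p_a + p_b ≤ 1) (hc : 0 ≤ p_c)
    (ht : 1 ≤ t) (htL : t ≤ L)
    (A B C : ℝ)
    (hA : A = p_a / (1 - p_b))
    (hB : B = ((1 - p_a - p_b) / (1 - p_b)) * p_b ^ (t - 1))
    (hC : C = ((1 - p_a - p_b) / (1 - p_b)) * p_b ^ (L - t)) :
    p_b * (B + C - A * B - A * C - B * C) + p_c * (A * B + A * C + B * C)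
      ≤ 2 * (p_b + 2 * p_c) * max (p_b ^ (t - 1)) (p_b ^ (L - t)) := by
  set M := max (p_b ^ (t - 1)) (p_b ^ (L - t)) with hM
  have hden : 0 < 1 - p_b := by linarith
  have hr0 : 0 ≤ (1 - p_a - p_b) / (1 - p_b) := by
    apply div_nonneg <;> linarith
  have hr1 : (1 - p_a - p_b) / (1 - p_b) ≤ 1 := by
    rw [div_le_one hden]; linarith
  have hpow1 : 0 < p_b ^ (t - 1) := pow_pos hb0 _
  have hpow2 : 0 < p_b ^ (L - t) := pow_pos hb0 _
  have hA0 : 0 ≤ A := by rw [hA]; positivity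
  have hA1 : A ≤ 1 := by
    rw [hA, div_le_one hden]; linarith
  have hB0 : 0 ≤ B := by rw [hB]; positivity
  have hC0 : 0 ≤ C := by rw [hC]; positivity
  have hBM : B ≤ M := by
    calc B ≤ 1 * p_b ^ (t - 1) := by rw [hB]; apply mul_le_mul_of_nonneg_right hr1 hpow1.le
    _ ≤ M := by rw [one_mul]; exact le_max_left _ _
  have hCM : C ≤ M := by
    calc C ≤ 1 * p_b ^ (L - t) := by rw [hC]; apply mul_le_mul_of_nonneg_right hr1 hpow2.le
    _ ≤ M := by rw [one_mul]; exact le_max_right _ _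
  have hM0 : 0 < M := lt_max_of_lt_left hpow1
  have hC1 : C ≤ 1 := by
    rw [hC]
    have := pow_le_one₀ hb0.le hb1.le (n := L - t)
    nlinarith
  have h1 : p_b * B ≤ p_b * M := mul_le_mul_of_nonneg_left hBM hb0.le
  have h2 : p_b * C ≤ p_b * M := mul_le_mul_of_nonneg_left hCM hb0.le
  have hABM : A * B ≤ M := by nlinarith
  have hACM : A * C ≤ M := by nlinarith
  have hBCM : B * C ≤ M := by nlinarith
  have h3 : p_c * (A * B) ≤ p_c * M := mul_le_mul_of_nonneg_left hABM hc
  have h4 : p_c * (A * C) ≤ p_c * M := mul_le_mul_of_nonneg_left hACM hc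
  have h5 : p_c * (B * C) ≤ p_c * M := mul_le_mul_of_nonneg_left hBCM hc
  have h6 : 0 ≤ p_b * (A * B) := by positivity
  have h7 : 0 ≤ p_b * (A * C) := by positivity
  have h8 : 0 ≤ p_b * (B * C) := by positivity
  have h9 : 0 ≤ p_c * M := mul_nonneg hc hM0.le
  nlinarith [h1, h2, h3, h4, h5, h6, h7, h8, h9]
end

section
/- Let n be a positive integer, 0 < p < 1, and τ an integer with p·n < τ ≤ n. Let X be binomially distributed with parameters n and p. Then P(X ≥ τ) ≥ (1/√(2n))·exp(−τ·log(τ/(n·p)) − (n−τ)·log((n−τ)/(n·(1−p)))). -/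
open Real Stirling Finset

/-- Upper tail probability `P(X ≥ τ)` of a binomial distribution with parameters `n` and `p`. -/
def binomTail (n τ : ℕ) (p : ℝ) : ℝ :=
  ∑ k ∈ Finset.Icc τ n, (n.choose k : ℝ) * p ^ k * (1 - p) ^ (n - k)

lemma stirling_pos {m : ℕ} (hm : 1 ≤ m) : 0 < stirlingSeq m := by
  obtain ⟨k, rfl⟩ := Nat.exists_eq_add_of_le hm
  rw [Nat.add_comm]
  exact Stirling.stirlingSeq'_pos k

lemma fact_eq (m : ℕ) (hm : 1 ≤ m) :
    (m.factorial : ℝ) = stirlingSeq m * (Real.sqrt (2 * m) * ((m : ℝ) / Real.exp 1) ^ m) := by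
  have hm' : (0:ℝ) < m := by exact_mod_cast hm
  have h1 : (0:ℝ) < Real.sqrt (2 * m) * ((m : ℝ) / Real.exp 1) ^ m := by positivity
  rw [stirlingSeq, div_mul_cancel₀ _ h1.ne']

lemma sqrt_pi_le_stirlingSeq {m : ℕ} (hm : 1 ≤ m) : Real.sqrt π ≤ stirlingSeq m := by
  obtain ⟨k, rfl⟩ := Nat.exists_eq_add_of_le hm
  have ht : Filter.Tendsto (stirlingSeq ∘ Nat.succ) Filter.atTop (nhds (Real.sqrt π)) :=
    Stirling.tendsto_stirlingSeq_sqrt_pi.comp (Filter.tendsto_add_atTop_nat 1)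
  have := Stirling.stirlingSeq'_antitone.le_of_tendsto ht k
  simpa [Nat.add_comm, Function.comp] using this

lemma stirlingSeq_le_one' {m : ℕ} (hm : 1 ≤ m) : stirlingSeq m ≤ Real.exp 1 / Real.sqrt 2 := by
  obtain ⟨k, rfl⟩ := Nat.exists_eq_add_of_le hm
  have := Stirling.stirlingSeq'_antitone (Nat.zero_le k)
  simpa [Nat.add_comm, Function.comp, Stirling.stirlingSeq_one] using this

lemma stirlingSeq_two : stirlingSeq 2 = Real.exp 1 ^ 2 / 4 := by
  have h4 : Real.sqrt (2 * (2:ℕ)) = 2 := by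
    rw [show (2 * (2:ℕ) : ℝ) = 2 ^ 2 by norm_num, Real.sqrt_sq (by norm_num)]
  rw [stirlingSeq]
  rw [show ((2:ℕ):ℝ) = (2:ℝ) by norm_num] at h4 ⊢
  rw [h4]
  have he : Real.exp 1 > 0 := Real.exp_pos 1
  field_simp [Nat.factorial]
  ring

lemma stirlingSeq_le_two' {m : ℕ} (hm : 2 ≤ m) : stirlingSeq m ≤ Real.exp 1 ^ 2 / 4 := by
  obtain ⟨k, rfl⟩ := Nat.exists_eq_add_of_le hm
  have h : (stirlingSeq ∘ Nat.succ) (k + 1) ≤ (stirlingSeq ∘ Nat.succ) 1 :=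
    Stirling.stirlingSeq'_antitone (Nat.le_add_left 1 k)
  rw [← stirlingSeq_two]
  simpa [Function.comp, Nat.add_comm, show 2 + k = (k + 1) + 1 by omega] using h

lemma num_e8 : Real.exp 1 ^ 4 / 32 ≤ Real.sqrt π := by
  rw [Real.le_sqrt (by positivity) Real.pi_pos.le]
  have he : Real.exp 1 ≤ 2.7182818286 := Real.exp_one_lt_d9.le
  have he8 : Real.exp 1 ^ 8 ≤ 2.7182818286 ^ 8 :=
    pow_le_pow_left₀ (Real.exp_pos 1).le he 8
  have hpi := Real.pi_gt_d6
  nlinarith [he8, hpi]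

lemma num_case1 (B : ℝ) (hB : 2 ≤ B) :
    Real.exp 1 / Real.sqrt 2 * (Real.exp 1 ^ 2 / 4) * Real.sqrt B ≤ Real.sqrt π * (1 + B) := by
  have h2 : (Real.sqrt 2) ^ 2 = 2 := Real.sq_sqrt (by norm_num)
  have hB2 : (Real.sqrt B) ^ 2 = B := Real.sq_sqrt (by linarith)
  have hpi2 : (Real.sqrt π) ^ 2 = π := Real.sq_sqrt Real.pi_pos.le
  have hL : 0 ≤ Real.exp 1 / Real.sqrt 2 * (Real.exp 1 ^ 2 / 4) * Real.sqrt B := by positivity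
  have hR : 0 ≤ Real.sqrt π * (1 + B) := by positivity
  have hsq : (Real.exp 1 / Real.sqrt 2 * (Real.exp 1 ^ 2 / 4) * Real.sqrt B) ^ 2
      ≤ (Real.sqrt π * (1 + B)) ^ 2 := by
    have h2pos : (0:ℝ) < Real.sqrt 2 := by positivity
    have he : Real.exp 1 ≤ 2.7182818286 := Real.exp_one_lt_d9.le
    have he6 : Real.exp 1 ^ 6 ≤ 2.7182818286 ^ 6 :=
      pow_le_pow_left₀ (Real.exp_pos 1).le he 6
    have hpi := Real.pi_gt_d6
    have hexp : (Real.exp 1 / Real.sqrt 2 * (Real.exp 1 ^ 2 / 4) * Real.sqrt B) ^ 2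
        = Real.exp 1 ^ 6 * B / 32 := by
      rw [mul_pow, mul_pow, div_pow, div_pow, h2, hB2]
      ring
    rw [hexp, mul_pow, hpi2]
    nlinarith [he6, hpi, sq_nonneg (B - 2)]
  exact (pow_le_pow_iff_left₀ hL hR two_ne_zero).mp hsq

set_option maxHeartbeats 2000000 in
lemma key (a b : ℕ) (ha : 1 ≤ a) (hb : 1 ≤ b) (hab : 3 ≤ a + b) :
    1 / Real.sqrt (2 * (a + b)) ≤
      ((a + b).choose a : ℝ) * ((a : ℝ) / ((a : ℝ) + b)) ^ a * ((b : ℝ) / ((a : ℝ) + b)) ^ b := by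
  have hA : (0:ℝ) < a := by exact_mod_cast ha
  have hB : (0:ℝ) < b := by exact_mod_cast hb
  have hN : (0:ℝ) < (a : ℝ) + b := by linarith
  have hsa := stirling_pos ha
  have hsb := stirling_pos hb
  have hsn := stirling_pos (show 1 ≤ a + b by omega)
  have hepos := Real.exp_pos 1
  -- choose in terms of factorials
  have hchoose : ((a + b).choose a : ℝ) * (a.factorial : ℝ) * (b.factorial : ℝ) = ((a + b).factorial : ℝ) := by
    have := Nat.choose_mul_factorial_mul_factorial (Nat.le_add_right a b)
    rw [Nat.add_sub_cancel_left] at this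
    exact_mod_cast this
  have hfa := fact_eq a ha
  have hfb := fact_eq b hb
  have hfn := fact_eq (a + b) (by omega)
  have hcast : ((a + b : ℕ) : ℝ) = (a : ℝ) + b := by push_cast; ring
  have hexpr : ((a + b).choose a : ℝ) * ((a : ℝ) / ((a : ℝ) + b)) ^ a * ((b : ℝ) / ((a : ℝ) + b)) ^ b
      = stirlingSeq (a + b) * Real.sqrt (2 * (a + b)) /
        (stirlingSeq a * stirlingSeq b * (Real.sqrt (2 * a) * Real.sqrt (2 * b))) := by
    have hcval : ((a + b).choose a : ℝ)
        = stirlingSeq (a + b) * (Real.sqrt (2 * (a + b)) * (((a:ℝ) + b) / Real.exp 1) ^ (a + b)) /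
          ((stirlingSeq a * (Real.sqrt (2 * a) * ((a : ℝ) / Real.exp 1) ^ a)) *
           (stirlingSeq b * (Real.sqrt (2 * b) * ((b : ℝ) / Real.exp 1) ^ b))) := by
      rw [← hcast, ← hfa, ← hfb, ← hfn, eq_div_iff (by positivity)]
      linarith [hchoose]
    rw [hcval, pow_add]
    have s2a : (0:ℝ) < Real.sqrt (2 * a) := by positivity
    have s2b : (0:ℝ) < Real.sqrt (2 * b) := by positivity
    field_simp
    have h1 : ((a:ℝ) + b) / Real.exp 1 * ((a:ℝ) / ((a:ℝ) + b)) = (a:ℝ) / Real.exp 1 := by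
      rw [div_mul_div_comm, mul_comm ((a:ℝ) + b), mul_div_mul_right _ _ hN.ne']
    have h2 : ((a:ℝ) + b) / Real.exp 1 * ((b:ℝ) / ((a:ℝ) + b)) = (b:ℝ) / Real.exp 1 := by
      rw [div_mul_div_comm, mul_comm ((a:ℝ) + b), mul_div_mul_right _ _ hN.ne']
    calc _ = (((a:ℝ) + b) / Real.exp 1 * ((a:ℝ) / ((a:ℝ) + b))) ^ a
          * (((a:ℝ) + b) / Real.exp 1 * ((b:ℝ) / ((a:ℝ) + b))) ^ b := by rw [mul_pow, mul_pow]; ring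
      _ = _ := by rw [h1, h2]
  rw [hexpr]
  rw [div_le_div_iff₀ (by positivity) (by positivity), one_mul]
  have hNN : Real.sqrt (2 * (a + b)) * Real.sqrt (2 * (a + b)) = 2 * ((a : ℝ) + b) := by
    rw [Real.mul_self_sqrt (by positivity)]
  have hsab : Real.sqrt (2 * a) * Real.sqrt (2 * b) = 2 * (Real.sqrt a * Real.sqrt b) := by
    rw [show (2 * a : ℝ) = 2 * (a:ℝ) by push_cast; ring, show (2 * b : ℝ) = 2 * (b:ℝ) by push_cast; ring,
      Real.sqrt_mul (by norm_num), Real.sqrt_mul (by norm_num)]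
    have h22 : Real.sqrt 2 * Real.sqrt 2 = 2 := Real.mul_self_sqrt (by norm_num)
    linear_combination (Real.sqrt a * Real.sqrt b) * h22
  have hmain : stirlingSeq a * stirlingSeq b * (Real.sqrt a * Real.sqrt b)
      ≤ Real.sqrt π * ((a : ℝ) + b) := by
    rcases Nat.lt_or_ge a 2 with ha2 | ha2
    · -- a = 1
      have ha1 : a = 1 := by omega
      subst ha1
      have hb2 : 2 ≤ b := by omega
      have hB2 : (2:ℝ) ≤ b := by exact_mod_cast hb2
      have h2 := stirlingSeq_le_two' hb2
      simp only [Nat.cast_one]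
      rw [Stirling.stirlingSeq_one, Real.sqrt_one, one_mul]
      calc Real.exp 1 / Real.sqrt 2 * stirlingSeq b * Real.sqrt b
          ≤ Real.exp 1 / Real.sqrt 2 * (Real.exp 1 ^ 2 / 4) * Real.sqrt b := by
            have hx : (0:ℝ) ≤ Real.exp 1 / Real.sqrt 2 := by positivity
            have hsqb : (0:ℝ) ≤ Real.sqrt b := Real.sqrt_nonneg _
            have hd : (0:ℝ) ≤ Real.exp 1 ^ 2 / 4 - stirlingSeq b := by linarith
            nlinarith [mul_nonneg (mul_nonneg hx hsqb) hd]
        _ ≤ Real.sqrt π * (1 + b) := num_case1 _ hB2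
    rcases Nat.lt_or_ge b 2 with hb2 | hb2
    · -- b = 1, symmetric
      have hb1 : b = 1 := by omega
      subst hb1
      have ha2' : 2 ≤ a := by omega
      have hA2 : (2:ℝ) ≤ a := by exact_mod_cast ha2'
      have h2 := stirlingSeq_le_two' ha2'
      simp only [Nat.cast_one]
      rw [Stirling.stirlingSeq_one, Real.sqrt_one, mul_one]
      calc stirlingSeq a * (Real.exp 1 / Real.sqrt 2) * Real.sqrt a
          ≤ Real.exp 1 / Real.sqrt 2 * (Real.exp 1 ^ 2 / 4) * Real.sqrt a := by
            have hx : (0:ℝ) ≤ Real.exp 1 / Real.sqrt 2 := by positivity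
            have hsqa : (0:ℝ) ≤ Real.sqrt a := Real.sqrt_nonneg _
            have hd : (0:ℝ) ≤ Real.exp 1 ^ 2 / 4 - stirlingSeq a := by linarith
            nlinarith [mul_nonneg (mul_nonneg hx hsqa) hd]
        _ ≤ Real.sqrt π * (1 + a) := num_case1 _ hA2
        _ = Real.sqrt π * ((a:ℝ) + 1) := by ring
    · -- a, b ≥ 2
      have h2a := stirlingSeq_le_two' ha2
      have h2b := stirlingSeq_le_two' hb2
      have hAM : Real.sqrt a * Real.sqrt b ≤ ((a:ℝ) + b) / 2 := by
        have h1 : Real.sqrt a * Real.sqrt b = Real.sqrt ((a:ℝ) * b) := (Real.sqrt_mul hA.le _).symm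
        rw [h1]
        have : Real.sqrt ((a:ℝ) * b) ≤ Real.sqrt ((((a:ℝ) + b) / 2) ^ 2) := by
          apply Real.sqrt_le_sqrt
          nlinarith [sq_nonneg ((a:ℝ) - b)]
        rwa [Real.sqrt_sq (by positivity)] at this
      calc stirlingSeq a * stirlingSeq b * (Real.sqrt a * Real.sqrt b)
          ≤ (Real.exp 1 ^ 2 / 4) * (Real.exp 1 ^ 2 / 4) * (((a:ℝ) + b) / 2) := by
            have hsqab : (0:ℝ) ≤ Real.sqrt a * Real.sqrt b := by positivity
            exact mul_le_mul (mul_le_mul h2a h2b hsb.le (by positivity)) hAM hsqab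
              (by positivity)
        _ = (Real.exp 1 ^ 4 / 32) * ((a:ℝ) + b) := by ring
        _ ≤ Real.sqrt π * ((a:ℝ) + b) := by
            have := num_e8
            nlinarith [hN]
  have hspi := sqrt_pi_le_stirlingSeq (show 1 ≤ a + b by omega)
  have e1 : stirlingSeq a * stirlingSeq b * (Real.sqrt (2 * a) * Real.sqrt (2 * b))
      = 2 * (stirlingSeq a * stirlingSeq b * (Real.sqrt a * Real.sqrt b)) := by
    rw [hsab]; ring
  have e2 : stirlingSeq (a + b) * Real.sqrt (2 * (a + b)) * Real.sqrt (2 * (a + b))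
      = stirlingSeq (a + b) * (2 * ((a:ℝ) + b)) := by
    rw [mul_assoc, hNN]
  rw [e1, e2]
  have := mul_le_mul_of_nonneg_right hspi (by linarith : (0:ℝ) ≤ 2 * ((a:ℝ) + b))
  nlinarith [hmain, this]

theorem stmt_10 (n : ℕ) (hn : 1 ≤ n) (p : ℝ) (hp0 : 0 < p) (hp1 : p < 1)
    (τ : ℕ) (hτ : p * n < τ) (hτn : τ ≤ n) :
    binomTail n τ p ≥
      (1 / Real.sqrt (2 * n)) * Real.exp (-(τ : ℝ) * Real.log (τ / (n * p))
        - ((n : ℝ) - τ) * Real.log (((n : ℝ) - τ) / (n * (1 - p)))) := by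
  have hn0 : (0:ℝ) < n := by exact_mod_cast hn
  have hq : 0 < 1 - p := by linarith
  have hτ1 : 1 ≤ τ := by
    rcases Nat.eq_zero_or_pos τ with h | h
    · exfalso; rw [h] at hτ; push_cast at hτ; nlinarith
    · exact h
  have hτpos : (0:ℝ) < τ := by exact_mod_cast hτ1
  have htail : (n.choose τ : ℝ) * p ^ τ * (1 - p) ^ (n - τ) ≤ binomTail n τ p := by
    apply Finset.single_le_sum (f := fun k => (n.choose k : ℝ) * p ^ k * (1 - p) ^ (n - k))
    · intro k _; positivity
    · exact Finset.mem_Icc.mpr ⟨le_refl τ, hτn⟩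
  rcases eq_or_lt_of_le hτn with heq | hlt
  · -- τ = n
    subst heq
    simp only [sub_self, zero_mul, sub_zero]
    have hlog : Real.log ((τ:ℝ) / ((τ:ℝ) * p)) = -Real.log p := by
      rw [show (τ:ℝ) / ((τ:ℝ) * p) = p⁻¹ by field_simp, Real.log_inv]
    rw [hlog, show -(τ:ℝ) * -Real.log p = (τ:ℝ) * Real.log p by ring,
      Real.exp_nat_mul, Real.exp_log hp0]
    have hsq : (1:ℝ) ≤ Real.sqrt (2 * τ) := by
      rw [Real.one_le_sqrt]
      have hτr : (1:ℝ) ≤ τ := by exact_mod_cast hτ1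
      nlinarith
    have hps : (0:ℝ) < p ^ τ := pow_pos hp0 τ
    have h1 : 1 / Real.sqrt (2 * τ) * p ^ τ ≤ p ^ τ := by
      rw [div_mul_eq_mul_div, one_mul, div_le_iff₀ (by linarith)]
      nlinarith
    have h2 : (τ.choose τ : ℝ) * p ^ τ * (1 - p) ^ (τ - τ) = p ^ τ := by
      simp [Nat.choose_self]
    rw [h2] at htail
    linarith
  · -- τ < n
    set m := n - τ with hmdef
    have hm : 1 ≤ m := by omega
    have hnm : τ + m = n := by omega
    have hmpos : (0:ℝ) < m := by exact_mod_cast hm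
    have hcastm : (m:ℝ) = (n:ℝ) - τ := by
      rw [hmdef]; push_cast [Nat.cast_sub hτn]; ring
    have hMpos : (0:ℝ) < (n:ℝ) - τ := by rw [← hcastm]; exact hmpos
    -- evaluate the exponential
    have hE : Real.exp (-(τ:ℝ) * Real.log ((τ:ℝ) / ((n:ℝ) * p))
          - ((n:ℝ) - (τ:ℝ)) * Real.log (((n:ℝ) - τ) / ((n:ℝ) * (1 - p))))
        = ((n:ℝ) * p / τ) ^ τ * ((n:ℝ) * (1 - p) / ((n:ℝ) - τ)) ^ m := by
      rw [sub_eq_add_neg, Real.exp_add]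
      congr 1
      · rw [show -(τ:ℝ) * Real.log ((τ:ℝ) / ((n:ℝ) * p))
            = (τ:ℝ) * Real.log (((τ:ℝ) / ((n:ℝ) * p))⁻¹) by rw [Real.log_inv]; ring,
          inv_div, Real.exp_nat_mul, Real.exp_log (by positivity)]
      · rw [show -(((n:ℝ) - (τ:ℝ)) * Real.log (((n:ℝ) - τ) / ((n:ℝ) * (1 - p))))
            = (m:ℝ) * Real.log ((((n:ℝ) - τ) / ((n:ℝ) * (1 - p)))⁻¹) by
              rw [Real.log_inv, hcastm]; ring,
          inv_div, Real.exp_nat_mul, Real.exp_log (by positivity)]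
    rw [hE]
    -- key inequality
    have hkey : 1 / Real.sqrt (2 * n) ≤
        (n.choose τ : ℝ) * ((τ:ℝ) / (n:ℝ)) ^ τ * ((m:ℝ) / (n:ℝ)) ^ m := by
      rcases Nat.lt_or_ge n 3 with hn3 | hn3
      · -- n = 2, τ = 1, m = 1
        have hn2 : n = 2 := by omega
        have hτ2 : τ = 1 := by omega
        have hm2 : m = 1 := by omega
        rw [hn2, hτ2, hm2]
        have h4 : Real.sqrt (2 * ((2:ℕ):ℝ)) = 2 := by
          rw [show (2 * ((2:ℕ):ℝ)) = 2 ^ 2 by push_cast; norm_num, Real.sqrt_sq (by norm_num)]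
        rw [h4]
        norm_num
      · have hk := key τ m hτ1 hm (by omega)
        rw [hnm] at hk
        have hNc : (τ:ℝ) + (m:ℝ) = (n:ℝ) := by exact_mod_cast congrArg (Nat.cast : ℕ → ℝ) hnm
        rw [hNc] at hk
        exact hk
    have hid1 : ((τ:ℝ)/(n:ℝ)) ^ τ * ((n:ℝ) * p / τ) ^ τ = p ^ τ := by
      rw [← mul_pow]; congr 1; field_simp
    have hid2 : ((m:ℝ)/(n:ℝ)) ^ m * ((n:ℝ) * (1 - p) / ((n:ℝ) - τ)) ^ m = (1 - p) ^ m := by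
      rw [← mul_pow]; congr 1; rw [← hcastm]; field_simp
    have hfinal : 1 / Real.sqrt (2 * n) * (((n:ℝ) * p / τ) ^ τ * ((n:ℝ) * (1 - p) / ((n:ℝ) - τ)) ^ m)
        ≤ (n.choose τ : ℝ) * p ^ τ * (1 - p) ^ m := by
      calc 1 / Real.sqrt (2 * n) * (((n:ℝ) * p / τ) ^ τ * ((n:ℝ) * (1 - p) / ((n:ℝ) - τ)) ^ m)
          ≤ ((n.choose τ : ℝ) * ((τ:ℝ) / (n:ℝ)) ^ τ * ((m:ℝ) / (n:ℝ)) ^ m) *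
            (((n:ℝ) * p / τ) ^ τ * ((n:ℝ) * (1 - p) / ((n:ℝ) - τ)) ^ m) := by
            apply mul_le_mul_of_nonneg_right hkey
            positivity
        _ = (n.choose τ : ℝ) * (((τ:ℝ)/(n:ℝ)) ^ τ * ((n:ℝ) * p / τ) ^ τ) *
            (((m:ℝ)/(n:ℝ)) ^ m * ((n:ℝ) * (1 - p) / ((n:ℝ) - τ)) ^ m) := by ring
        _ = (n.choose τ : ℝ) * p ^ τ * (1 - p) ^ m := by rw [hid1, hid2]
    rw [ge_iff_le, ← mul_assoc] at *
    calc 1 / Real.sqrt (2 * n) * ((n:ℝ) * p / τ) ^ τ * ((n:ℝ) * (1 - p) / ((n:ℝ) - τ)) ^ m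
        ≤ (n.choose τ : ℝ) * p ^ τ * (1 - p) ^ m := by linarith [hfinal]
      _ ≤ binomTail n τ p := htail
end

section
/- Fix integers n ≥ 1 and 0 ≤ τ_α < τ_0 < τ_01 ≤ n. For p ∈ (0,1), let X_p be binomial with parameters n, p and define p_a = P(X_p ≤ τ_α), p_b = P(τ_α < X_p ≤ τ_0), p_c = P(τ_0 < X_p ≤ τ_01), p_d = P(τ_01 < X_p). Then there exists p' > 0 such that for all 0 < p < p', p_b·(p_c + p_d)² < p_c·p_a². -/
/-- `P(a < X ≤ b)` for `X` binomial with parameters `n` and `p`. -/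
def binomRange (n a b : ℕ) (p : ℝ) : ℝ :=
  ∑ k ∈ Finset.Icc (a + 1) (min b n), (n.choose k : ℝ) * p ^ k * (1 - p) ^ (n - k)

/-- `P(X ≤ b)` for `X` binomial with parameters `n` and `p`. -/
def binomCdf (n b : ℕ) (p : ℝ) : ℝ :=
  ∑ k ∈ Finset.Icc 0 (min b n), (n.choose k : ℝ) * p ^ k * (1 - p) ^ (n - k)

lemma br_upper (n a b : ℕ) (p : ℝ) (hp : 0 ≤ p) (hp1 : p ≤ 1) :
    binomRange n a b p ≤ 2 ^ n * p ^ (a + 1) := by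
  have h1p : (0:ℝ) ≤ 1 - p := by linarith
  calc binomRange n a b p
      ≤ ∑ k ∈ Finset.Icc (a + 1) (min b n), (n.choose k : ℝ) * p ^ (a + 1) := by
        apply Finset.sum_le_sum
        intro k hk
        have hk1 : a + 1 ≤ k := (Finset.mem_Icc.mp hk).1
        have hpk : p ^ k ≤ p ^ (a + 1) := pow_le_pow_of_le_one hp hp1 hk1
        have h2 : (1 - p) ^ (n - k) ≤ 1 := pow_le_one₀ h1p (by linarith)
        have hc : (0:ℝ) ≤ (n.choose k : ℝ) := by positivity
        calc (n.choose k : ℝ) * p ^ k * (1 - p) ^ (n - k)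
            ≤ (n.choose k : ℝ) * p ^ k * 1 := by
              apply mul_le_mul_of_nonneg_left h2 (by positivity)
          _ = (n.choose k : ℝ) * p ^ k := by ring
          _ ≤ (n.choose k : ℝ) * p ^ (a + 1) := by
              apply mul_le_mul_of_nonneg_left hpk hc
    _ ≤ ∑ k ∈ Finset.range (n + 1), (n.choose k : ℝ) * p ^ (a + 1) := by
        apply Finset.sum_le_sum_of_subset_of_nonneg
        · intro k hk
          have := (Finset.mem_Icc.mp hk).2
          simp only [Finset.mem_range]
          omega
        · intro k _ _
          positivity
    _ = 2 ^ n * p ^ (a + 1) := by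
        rw [← Finset.sum_mul]
        congr 1
        rw [← Nat.cast_sum]
        rw [Nat.sum_range_choose]
        push_cast
        ring

lemma br_lower (n a b : ℕ) (hab : a < b) (hbn : b ≤ n) (p : ℝ) (hp : 0 ≤ p) (hp1 : p ≤ 1) :
    p ^ (a + 1) * (1 - p) ^ n ≤ binomRange n a b p := by
  have h1p : (0:ℝ) ≤ 1 - p := by linarith
  have hmem : a + 1 ∈ Finset.Icc (a + 1) (min b n) := by
    simp only [Finset.mem_Icc]
    omega
  have hsingle : (n.choose (a+1) : ℝ) * p ^ (a+1) * (1 - p) ^ (n - (a+1))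
      ≤ binomRange n a b p := by
    apply Finset.single_le_sum (f := fun k => (n.choose k : ℝ) * p ^ k * (1 - p) ^ (n - k))
      (fun k _ => by positivity) hmem
  refine le_trans ?_ hsingle
  have hc : (1:ℝ) ≤ (n.choose (a+1) : ℝ) := by
    have := Nat.choose_pos (show a + 1 ≤ n by omega)
    exact_mod_cast this
  have hpow : (1 - p) ^ n ≤ (1 - p) ^ (n - (a+1)) :=
    pow_le_pow_of_le_one h1p (by linarith) (by omega)
  calc p ^ (a+1) * (1 - p) ^ n ≤ p ^ (a+1) * (1 - p) ^ (n - (a+1)) := by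
        apply mul_le_mul_of_nonneg_left hpow (by positivity)
    _ = 1 * p ^ (a+1) * (1 - p) ^ (n - (a+1)) := by ring
    _ ≤ (n.choose (a+1) : ℝ) * p ^ (a+1) * (1 - p) ^ (n - (a+1)) := by
        apply mul_le_mul_of_nonneg_right (mul_le_mul_of_nonneg_right hc (by positivity)) (pow_nonneg h1p _)

lemma cdf_lower (n b : ℕ) (p : ℝ) (hp : 0 ≤ p) (hp1 : p ≤ 1) :
    (1 - p) ^ n ≤ binomCdf n b p := by
  have h1p : (0:ℝ) ≤ 1 - p := by linarith
  have hmem : 0 ∈ Finset.Icc 0 (min b n) := by simp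
  have hsingle : (n.choose 0 : ℝ) * p ^ 0 * (1 - p) ^ (n - 0)
      ≤ binomCdf n b p := by
    apply Finset.single_le_sum (f := fun k => (n.choose k : ℝ) * p ^ k * (1 - p) ^ (n - k))
      (fun k _ => by positivity) hmem
  simpa using hsingle

lemma br_nonneg (n a b : ℕ) (p : ℝ) (hp : 0 ≤ p) (hp1 : p ≤ 1) :
    0 ≤ binomRange n a b p := by
  apply Finset.sum_nonneg
  intro k _
  have : (0:ℝ) ≤ 1 - p := by linarith
  positivity

theorem stmt_13 (n : ℕ) (hn : 1 ≤ n) (τ_α τ_0 τ_01 : ℕ)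
    (h1 : τ_α < τ_0) (h2 : τ_0 < τ_01) (h3 : τ_01 ≤ n) :
    ∃ p' : ℝ, 0 < p' ∧ ∀ p : ℝ, 0 < p → p < p' →
      binomRange n τ_α τ_0 p * (binomRange n τ_0 τ_01 p + binomRange n τ_01 n p) ^ 2
        < binomRange n τ_0 τ_01 p * (binomCdf n τ_α p) ^ 2 := by
  refine ⟨min (1 / (2 * n)) (1 / 2 ^ (3 * n + 5)), ?_, ?_⟩
  · apply lt_min
    · positivity
    · positivity
  intro p hp hpp
  have hp1 : p ≤ 1 := by
    have := lt_of_lt_of_le hpp (min_le_right _ _)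
    have h2n : (1:ℝ) ≤ 2 ^ (3 * n + 5) := one_le_pow₀ (by norm_num)
    have : p < 1 := lt_of_lt_of_le this (by
      rw [div_le_one (by positivity)]; exact h2n)
    linarith
  have hp0 : 0 ≤ p := le_of_lt hp
  have hpsm : p < 1 / 2 ^ (3 * n + 5) := lt_of_lt_of_le hpp (min_le_right _ _)
  have hpn : p < 1 / (2 * n) := lt_of_lt_of_le hpp (min_le_left _ _)
  have hnp : (n:ℝ) * p < 1 / 2 := by
    have hn0 : (0:ℝ) < n := by exact_mod_cast hn
    rw [lt_div_iff₀ (by positivity)] at hpn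
    nlinarith
  have h1pn : (1:ℝ)/2 ≤ (1 - p) ^ n := by
    have h0 := one_add_mul_le_pow (a := -p) (by linarith) n
    rw [mul_neg, ← sub_eq_add_neg, ← sub_eq_add_neg] at h0
    linarith
  set A := binomRange n τ_α τ_0 p with hAdef
  set B := binomRange n τ_0 τ_01 p with hBdef
  set C := binomRange n τ_01 n p with hCdef
  set D := binomCdf n τ_α p with hDdef
  have hA : A ≤ 2 ^ n * p ^ (τ_α + 1) := br_upper n τ_α τ_0 p hp0 hp1
  have hBu : B ≤ 2 ^ n * p ^ (τ_0 + 1) := br_upper n τ_0 τ_01 p hp0 hp1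
  have hCu : C ≤ 2 ^ n * p ^ (τ_01 + 1) := br_upper n τ_01 n p hp0 hp1
  have hBl : p ^ (τ_0 + 1) * (1 - p) ^ n ≤ B := br_lower n τ_0 τ_01 h2 h3 p hp0 hp1
  have hDl : (1 - p) ^ n ≤ D := cdf_lower n τ_α p hp0 hp1
  have hA0 : 0 ≤ A := br_nonneg _ _ _ _ hp0 hp1
  have hB0 : 0 ≤ B := br_nonneg _ _ _ _ hp0 hp1
  have hC0 : 0 ≤ C := br_nonneg _ _ _ _ hp0 hp1
  have hq : (0:ℝ) < p ^ (τ_0 + 1) := by positivity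
  -- p^(τ_01+1) ≤ p^(τ_0+1)
  have hpow01 : p ^ (τ_01 + 1) ≤ p ^ (τ_0 + 1) :=
    pow_le_pow_of_le_one hp0 hp1 (by omega)
  have hBC : B + C ≤ 2 ^ (n + 1) * p ^ (τ_0 + 1) := by
    have : C ≤ 2 ^ n * p ^ (τ_0 + 1) := le_trans hCu (by
      apply mul_le_mul_of_nonneg_left hpow01 (by positivity))
    calc B + C ≤ 2 ^ n * p ^ (τ_0 + 1) + 2 ^ n * p ^ (τ_0 + 1) := by linarith
      _ = 2 ^ (n + 1) * p ^ (τ_0 + 1) := by ring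
  have hBC0 : 0 ≤ B + C := by linarith
  -- key smallness
  have hsmall : p ^ (τ_α + τ_0 + 2) < 1 / 2 ^ (3 * n + 5) := by
    calc p ^ (τ_α + τ_0 + 2) ≤ p ^ 1 := pow_le_pow_of_le_one hp0 hp1 (by omega)
      _ = p := pow_one p
      _ < 1 / 2 ^ (3 * n + 5) := hpsm
  -- combine
  have hB2 : p ^ (τ_0 + 1) / 2 ≤ B := by
    calc p ^ (τ_0 + 1) / 2 = p ^ (τ_0 + 1) * (1/2) := by ring
      _ ≤ p ^ (τ_0 + 1) * (1 - p) ^ n := by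
          apply mul_le_mul_of_nonneg_left h1pn (le_of_lt hq)
      _ ≤ B := hBl
  have hD2 : (1:ℝ)/2 ≤ D := le_trans h1pn hDl
  have step1 : A * (B + C) ^ 2 ≤ (2 ^ n * p ^ (τ_α + 1)) * (2 ^ (n + 1) * p ^ (τ_0 + 1)) ^ 2 := by
    apply mul_le_mul hA (pow_le_pow_left₀ hBC0 hBC 2) (by positivity) (by positivity)
  have step2 : (2 ^ n * p ^ (τ_α + 1)) * (2 ^ (n + 1) * p ^ (τ_0 + 1)) ^ 2
      = 2 ^ (3 * n + 2) * p ^ (τ_α + τ_0 + 2) * p ^ (τ_0 + 1) := by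
    have e1 : (2:ℝ) ^ (3 * n + 2) = 2 ^ n * (2 ^ (n + 1)) ^ 2 := by
      rw [← pow_mul, ← pow_add]; congr 1; omega
    have e2 : p ^ (τ_α + τ_0 + 2) = p ^ (τ_α + 1) * p ^ (τ_0 + 1) := by
      rw [← pow_add]; congr 1; omega
    rw [e1, e2]; ring
  have step3 : 2 ^ (3 * n + 2) * p ^ (τ_α + τ_0 + 2) * p ^ (τ_0 + 1)
      < 2 ^ (3 * n + 2) * (1 / 2 ^ (3 * n + 5)) * p ^ (τ_0 + 1) := by
    apply mul_lt_mul_of_pos_right _ hq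
    apply mul_lt_mul_of_pos_left hsmall (by positivity)
  have step4 : (2:ℝ) ^ (3 * n + 2) * (1 / 2 ^ (3 * n + 5)) * p ^ (τ_0 + 1)
      = p ^ (τ_0 + 1) / 8 := by
    rw [pow_add]
    field_simp
    ring
  have step5 : p ^ (τ_0 + 1) / 8 ≤ B * D ^ 2 := by
    have hD0 : (0:ℝ) ≤ 1/2 := by norm_num
    calc p ^ (τ_0 + 1) / 8 = (p ^ (τ_0 + 1) / 2) * (1/2) ^ 2 := by ring
      _ ≤ B * D ^ 2 := by
          apply mul_le_mul hB2 (pow_le_pow_left₀ hD0 hD2 2) (by positivity) hB0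
  calc A * (B + C) ^ 2 ≤ (2 ^ n * p ^ (τ_α + 1)) * (2 ^ (n + 1) * p ^ (τ_0 + 1)) ^ 2 := step1
    _ = 2 ^ (3 * n + 2) * p ^ (τ_α + τ_0 + 2) * p ^ (τ_0 + 1) := step2
    _ < 2 ^ (3 * n + 2) * (1 / 2 ^ (3 * n + 5)) * p ^ (τ_0 + 1) := step3
    _ = p ^ (τ_0 + 1) / 8 := step4
    _ ≤ B * D ^ 2 := step5
end

section
/- Let 0 ≤ p_a, 0 ≤ p_b < 1 with p_a + p_b ≤ 1, and set p_c ≥ 0, p_d ≥ 0 with p_a + p_b + p_c + p_d = 1 and p_c > 0, p_a > 0. Then p_a + (p_a/(1−p_b)²)·(p_b·(2 − p_a − 2·p_b) + p_a·p_c) > p_a + p_b if and only if p_b·(p_c + p_d)²/(p_c·p_a²) < 1. -/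
theorem stmt_14 (p_a p_b p_c p_d : ℝ)
    (ha : 0 ≤ p_a) (hb : 0 ≤ p_b) (hb1 : p_b < 1) (hab : p_a + p_b ≤ 1)
    (hc : 0 ≤ p_c) (hd : 0 ≤ p_d) (hsum : p_a + p_b + p_c + p_d = 1)
    (hc0 : 0 < p_c) (ha0 : 0 < p_a) :
    p_a + (p_a / (1 - p_b) ^ 2) * (p_b * (2 - p_a - 2 * p_b) + p_a * p_c) > p_a + p_b
      ↔ p_b * (p_c + p_d) ^ 2 / (p_c * p_a ^ 2) < 1 := by
  have hs : 0 < 1 - p_b := by linarith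
  rw [gt_iff_lt, add_lt_add_iff_left, div_mul_eq_mul_div,
    lt_div_iff₀ (by positivity), div_lt_one (by positivity)]
  have hd' : p_d = 1 - p_a - p_b - p_c := by linarith
  subst hd'
  constructor <;> intro h <;> nlinarith [h]
end
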